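/- Let b > 0. Then there exists ε₀ > 0 such that for every ε ∈ (0, ε₀), the 2×2 real symmetric matrices M_ε(P₁) and M_ε(P₂), where P₁ = [[1, b],[0, 1]] and P₂ = [[1, 0],[−b, 1]], both have negative determinant; in particular each has exactly one positive and one negative eigenvalue, hence signature 0. -/
import Mathlib


open Matrix

/-- `M_ε(P) = Pᵀ S⁻(ε) P + S⁺(ε)` for `2 × 2` matrices, where
`S⁻(ε) = [[sin 2ε, −cos 2ε], [−cos 2ε, −sin 2ε]]` and
`S⁺(ε) = [[sin 2ε, cos 2ε], [cos 2ε, −sin 2ε]]`. -/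
noncomputable def Meps2 (ε : ℝ) (P : Matrix (Fin 2) (Fin 2) ℝ) : Matrix (Fin 2) (Fin 2) ℝ :=
  Pᵀ * !![Real.sin (2 * ε), -Real.cos (2 * ε); -Real.cos (2 * ε), -Real.sin (2 * ε)] * P
    + !![Real.sin (2 * ε), Real.cos (2 * ε); Real.cos (2 * ε), -Real.sin (2 * ε)]

lemma det_Meps2_one (b ε : ℝ) :
    (Meps2 ε !![1, b; 0, 1]).det =
      Real.sin (2 * ε) * ((b ^ 2 - 4) * Real.sin (2 * ε) - 4 * b * Real.cos (2 * ε)) := by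
  simp [Meps2, Matrix.det_fin_two, Matrix.mul_apply, Fin.sum_univ_two, Matrix.transpose_apply, Matrix.vecHead, Matrix.vecTail]
  ring

lemma det_Meps2_two (b ε : ℝ) :
    (Meps2 ε !![1, 0; -b, 1]).det =
      Real.sin (2 * ε) * ((b ^ 2 - 4) * Real.sin (2 * ε) - 4 * b * Real.cos (2 * ε)) := by
  simp [Meps2, Matrix.det_fin_two, Matrix.mul_apply, Fin.sum_univ_two, Matrix.transpose_apply, Matrix.vecHead, Matrix.vecTail]
  ring

theorem stmt_18 (b : ℝ) (hb : 0 < b) :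
    ∃ ε₀ > (0 : ℝ), ∀ ε : ℝ, 0 < ε → ε < ε₀ →
      (Meps2 ε !![1, b; 0, 1]).det < 0 ∧ (Meps2 ε !![1, 0; -b, 1]).det < 0 := by
  set f : ℝ → ℝ := fun ε => (b ^ 2 - 4) * Real.sin (2 * ε) - 4 * b * Real.cos (2 * ε) with hf
  have hcont : Continuous f := by fun_prop
  have hf0 : f 0 = -(4 * b) := by simp [hf]
  have hev : ∀ᶠ ε in nhds (0 : ℝ), f ε < 0 := by
    have : Set.Iio (0 : ℝ) ∈ nhds (f 0) := by
      rw [hf0]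
      exact Iio_mem_nhds (by linarith)
    exact hcont.continuousAt.eventually_mem this
  obtain ⟨δ, hδpos, hδ⟩ := Metric.eventually_nhds_iff.mp hev
  refine ⟨min δ (Real.pi / 4), lt_min hδpos (by positivity), fun ε hε hε' => ?_⟩
  have h1 : f ε < 0 := hδ (by
    rw [Real.dist_eq, sub_zero, abs_of_pos hε]
    exact lt_of_lt_of_le hε' (min_le_left _ _))
  have hsin : 0 < Real.sin (2 * ε) := by
    apply Real.sin_pos_of_pos_of_lt_pi (by linarith)
    have := lt_of_lt_of_le hε' (min_le_right _ _)
    nlinarith [Real.pi_pos]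
  constructor
  · rw [det_Meps2_one]; exact mul_neg_of_pos_of_neg hsin h1
  · rw [det_Meps2_two]; exact mul_neg_of_pos_of_neg hsin h1
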